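/- Let D be a ring and M a left D-module of finite type. Given any filtered ring structure (D, D_i) with exhaustive filtration and 1 ∈ D_0, M admits a good filtration: there exists a filtration (M_i)_{i∈ℤ} making (M, M_i) a filtered (D, D_i)-module together with a strict surjective filtered morphism φ : (L, L_i) → (M, M_i) with φ(L_i) = M_i, where (L, L_i) is a free filtered (D, D_i)-module of finite type. -/

import Mathlib

/-- The `i`-th step of the filtration of a filt free filtered `(D, Dᵢ)`-module of finite type,
a finite direct sum of twists `D(n k)` (where `D(n)ᵢ = D_{i+n}`). -/
def freeFilt {D : Type*} [Ring D] (FD : ℤ → AddSubgroup D) {s : ℕ} (n : Fin s → ℤ)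
    (i : ℤ) : AddSubgroup (Fin s → D) where
  carrier := {x | ∀ k, x k ∈ FD (i + n k)}
  zero_mem' := fun k => (FD _).zero_mem
  add_mem' := fun hx hy k => (FD _).add_mem (hx k) (hy k)
  neg_mem' := fun hx k => (FD _).neg_mem (hx k)

/-! Choose generators `x₁, …, xₛ` of `M` and let `φ : Dˢ → M` send the `k`-th basis vector to
`x_k`. For any twists `n`, the free filtration on `Dˢ` is monotone and multiplicative
because the filtration of `D` is, and both properties pass to the image filtration
`M_i := φ(L_i)` since `φ` is `D`-linear. -/

section FreeFiltration

variable {D : Type*} [Ring D] {FD : ℤ → AddSubgroup D} {s : ℕ} (n : Fin s → ℤ)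

theorem freeFilt_monotone (hFDmono : Monotone FD) : Monotone (freeFilt FD n) :=
  fun _ _ hij _ hx k => hFDmono (by omega) (hx k)

theorem smul_mem_freeFilt (hFDmul : ∀ i j : ℤ, ∀ a ∈ FD i, ∀ b ∈ FD j, a * b ∈ FD (i + j))
    {i j : ℤ} {a : D} (ha : a ∈ FD i) {x : Fin s → D} (hx : x ∈ freeFilt FD n j) :
    a • x ∈ freeFilt FD n (i + j) := fun k => by
  simpa only [add_assoc, Pi.smul_apply, smul_eq_mul] using hFDmul i (j + n k) a ha (x k) (hx k)

end FreeFiltration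

section ImageFiltration

variable {D L M : Type*} [Ring D] [AddCommGroup L] [Module D L] [AddCommGroup M] [Module D M]
  {FD : ℤ → AddSubgroup D} {FL : ℤ → AddSubgroup L} (φ : L →ₗ[D] M)

theorem monotone_map_filtration (hFL : Monotone FL) :
    Monotone fun i => (FL i).map φ.toAddMonoidHom :=
  fun _ _ hij => AddSubgroup.map_mono (hFL hij)

theorem smul_mem_map_filtration
    (hFL : ∀ i j : ℤ, ∀ a ∈ FD i, ∀ x ∈ FL j, a • x ∈ FL (i + j))
    {i j : ℤ} {a : D} (ha : a ∈ FD i) {y : M} (hy : y ∈ (FL j).map φ.toAddMonoidHom) :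
    a • y ∈ (FL (i + j)).map φ.toAddMonoidHom := by
  obtain ⟨x, hx, rfl⟩ := hy
  exact ⟨a • x, hFL i j a ha x hx, φ.map_smul a x⟩

end ImageFiltration

theorem stmt_13_general {D M : Type*} [Ring D] [AddCommGroup M] [Module D M]
    (FD : ℤ → AddSubgroup D) (hFDmono : Monotone FD)
    (hFDmul : ∀ i j : ℤ, ∀ a ∈ FD i, ∀ b ∈ FD j, a * b ∈ FD (i + j))
    [Module.Finite D M] :
    ∃ (s : ℕ) (n : Fin s → ℤ) (FM : ℤ → AddSubgroup M) (φ : (Fin s → D) →ₗ[D] M),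
      Monotone FM ∧
      (∀ i j : ℤ, ∀ a ∈ FD i, ∀ x ∈ FM j, a • x ∈ FM (i + j)) ∧
      Function.Surjective φ ∧
      ∀ i : ℤ, FM i = (freeFilt FD n i).map φ.toAddMonoidHom := by
  obtain ⟨s, x, hx⟩ := Module.Finite.exists_fin (R := D) (M := M)
  set φ : (Fin s → D) →ₗ[D] M := Fintype.linearCombination D x
  have hφ : Function.Surjective φ := by
    rw [← LinearMap.range_eq_top, Fintype.range_linearCombination, hx]
  exact ⟨s, 0, _, φ, monotone_map_filtration φ (freeFilt_monotone 0 hFDmono),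
    fun i j a ha y hy => smul_mem_map_filtration φ
      (fun _ _ _ hb _ hz => smul_mem_freeFilt 0 hFDmul hb hz) ha hy,
    hφ, fun _ => rfl⟩

/-- Any `D`-module of finite type admits a good filtration: a filtration which is the image
filtration under a strict surjective filtered morphism from a free filtered `(D, Dᵢ)`-module
of finite type. -/
theorem stmt_13 {D M : Type*} [Ring D] [AddCommGroup M] [Module D M]
    (FD : ℤ → AddSubgroup D) (hFDmono : Monotone FD)
    (hFDone : (1 : D) ∈ FD 0)
    (hFDmul : ∀ i j : ℤ, ∀ a ∈ FD i, ∀ b ∈ FD j, a * b ∈ FD (i + j))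
    (hFDexh : ∀ a : D, ∃ i, a ∈ FD i)
    [Module.Finite D M] :
    ∃ (s : ℕ) (n : Fin s → ℤ) (FM : ℤ → AddSubgroup M) (φ : (Fin s → D) →ₗ[D] M),
      Monotone FM ∧
      (∀ i j : ℤ, ∀ a ∈ FD i, ∀ x ∈ FM j, a • x ∈ FM (i + j)) ∧
      Function.Surjective φ ∧
      ∀ i : ℤ, FM i = (freeFilt FD n i).map φ.toAddMonoidHom :=
  stmt_13_general FD hFDmono hFDmul
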